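/- arXiv:math/0005220 — 2 statements merged into one kernel-verified Lean document; each statement's English description precedes it below -/
import Mathlib

section
/- Let A, B ∈ SL(2,ℝ) satisfy tr(A·B·A⁻¹·B⁻¹) = −2, tr A > 2, tr B > 2, tr(A·B) ≥ tr B, and tr A · tr B − tr(A·B) ≥ tr B. Then 1 − 4/(tr A)² ≥ 4/(tr B)² and 4/(tr B)² ≥ 4/(tr A) − 8/(tr A)². -/
/-!
Write `x = tr A`, `y = tr B`, `z = tr AB`. By the Fricke identity
`tr [A, B] = x² + y² + z² - xyz - 2`, the hypothesis `tr [A, B] = -2` is the Markov equation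
`x² + y² + z² = xyz`. Seen as a quadratic in `z` it has the real root `z`, so its discriminant
`x²y² - 4x² - 4y² = (2z - xy)²` is nonnegative; this is the first inequality. On the Markov
surface `(z - y)(xy - z - y) = x² - (x - 2)y²`, and the two length hypotheses make both factors
nonnegative; this is the second inequality.
-/

/-- The trace of an element of `SL(2,ℝ)`, as the trace of the underlying matrix. -/
def trSL2 (A : Matrix.SpecialLinearGroup (Fin 2) ℝ) : ℝ :=
  Matrix.trace (A : Matrix (Fin 2) (Fin 2) ℝ)

open Matrix

theorem Matrix.trace_mul_mul_adjugate_mul_adjugate_fin_two {R : Type*} [CommRing R]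
    (A B : Matrix (Fin 2) (Fin 2) R) :
    trace (A * B * adjugate A * adjugate B) =
      trace A ^ 2 * det B + trace B ^ 2 * det A + trace (A * B) ^ 2
        - trace A * trace B * trace (A * B) - 2 * det A * det B := by
  simp only [adjugate_fin_two, det_fin_two, trace_fin_two, mul_apply, Fin.sum_univ_two, of_apply,
    cons_val', cons_val_zero, cons_val_one, empty_val', cons_val_fin_one]
  ring

theorem Matrix.SpecialLinearGroup.trace_commutator_fin_two {R : Type*} [CommRing R]
    (A B : SpecialLinearGroup (Fin 2) R) :
    trace (↑(A * B * A⁻¹ * B⁻¹) : Matrix (Fin 2) (Fin 2) R) =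
      trace (A : Matrix (Fin 2) (Fin 2) R) ^ 2 + trace (B : Matrix (Fin 2) (Fin 2) R) ^ 2
        + trace (↑(A * B) : Matrix (Fin 2) (Fin 2) R) ^ 2
        - trace (A : Matrix (Fin 2) (Fin 2) R) * trace (B : Matrix (Fin 2) (Fin 2) R)
          * trace (↑(A * B) : Matrix (Fin 2) (Fin 2) R) - 2 := by
  simpa [SpecialLinearGroup.coe_inv] using
    trace_mul_mul_adjugate_mul_adjugate_fin_two (A : Matrix (Fin 2) (Fin 2) R) B

section Markov

variable {R : Type*} [CommRing R] {x y z : R}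

theorem sq_two_mul_sub_mul_of_markov (h : x ^ 2 + y ^ 2 + z ^ 2 = x * y * z) :
    (2 * z - x * y) ^ 2 = x ^ 2 * y ^ 2 - 4 * x ^ 2 - 4 * y ^ 2 := by
  linear_combination 4 * h

theorem sub_mul_sub_of_markov (h : x ^ 2 + y ^ 2 + z ^ 2 = x * y * z) :
    (z - y) * (x * y - z - y) = x ^ 2 - (x - 2) * y ^ 2 := by
  linear_combination -h

end Markov

section Reciprocals

variable {K : Type*} [Field K] [LinearOrder K] [IsStrictOrderedRing K] {x y : K}

theorem four_div_sq_le_one_sub_four_div_sq (hx : x ≠ 0) (hy : y ≠ 0)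
    (h : 4 * x ^ 2 + 4 * y ^ 2 ≤ x ^ 2 * y ^ 2) : 4 / y ^ 2 ≤ 1 - 4 / x ^ 2 := by
  rw [le_sub_iff_add_le, div_add_div _ _ (pow_ne_zero 2 hy) (pow_ne_zero 2 hx),
    div_le_one (by positivity)]
  linarith

theorem four_div_sub_eight_div_sq_le_four_div_sq (hx : x ≠ 0) (hy : y ≠ 0)
    (h : (x - 2) * y ^ 2 ≤ x ^ 2) : 4 / x - 8 / x ^ 2 ≤ 4 / y ^ 2 := by
  have : 4 / x - 8 / x ^ 2 = (4 * x - 8) / x ^ 2 := by field_simp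
  rw [this, div_le_div_iff₀ (by positivity) (by positivity)]
  linarith

end Reciprocals

/-- inequality (2) in the proof of Theorem 4.3 of the paper, in terms of traces:
if `tr[A,B] = −2`, `tr A > 2`, `tr B > 2`, `tr(AB) ≥ tr B` and `trA·trB − tr(AB) ≥ tr B`, then
`1 − 4/tr²A ≥ 4/tr²B` and `4/tr²B ≥ 4/trA − 8/tr²A`. -/
theorem shortest_generator_trace_bounds (A B : Matrix.SpecialLinearGroup (Fin 2) ℝ)
    (hcomm : trSL2 (A * B * A⁻¹ * B⁻¹) = -2)
    (hA : 2 < trSL2 A) (hB : 2 < trSL2 B)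
    (hAB : trSL2 B ≤ trSL2 (A * B))
    (hABinv : trSL2 B ≤ trSL2 A * trSL2 B - trSL2 (A * B)) :
    4 / trSL2 B ^ 2 ≤ 1 - 4 / trSL2 A ^ 2 ∧
      4 / trSL2 A - 8 / trSL2 A ^ 2 ≤ 4 / trSL2 B ^ 2 := by
  have hfricke : trSL2 (A * B * A⁻¹ * B⁻¹) = trSL2 A ^ 2 + trSL2 B ^ 2 + trSL2 (A * B) ^ 2
      - trSL2 A * trSL2 B * trSL2 (A * B) - 2 :=
    SpecialLinearGroup.trace_commutator_fin_two A B
  have hmarkov : trSL2 A ^ 2 + trSL2 B ^ 2 + trSL2 (A * B) ^ 2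
      = trSL2 A * trSL2 B * trSL2 (A * B) := by
    linarith
  have hx : trSL2 A ≠ 0 := by linarith
  have hy : trSL2 B ≠ 0 := by linarith
  constructor
  · apply four_div_sq_le_one_sub_four_div_sq hx hy
    linarith [sq_two_mul_sub_mul_of_markov hmarkov,
      sq_nonneg (2 * trSL2 (A * B) - trSL2 A * trSL2 B)]
  · apply four_div_sub_eight_div_sq_le_four_div_sq hx hy
    linarith [sub_mul_sub_of_markov hmarkov, mul_nonneg (sub_nonneg.2 hAB) (sub_nonneg.2 hABinv)]
end

section
/- For every ε > 0 there exists b₀ > 0 such that: for every real b with 0 < b < b₀ and every real x ≥ 1 satisfying 2/cosh(b/2) − 2/cosh(b/2)² ≤ 1/x² ≤ 1 − 1/cosh(b/2)², one has |arccosh x − log(4/b)| < ε. In particular arccosh(x)/log(1/b) → 1 uniformly as b → 0⁺. -/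
/-!
The sandwich pins `x` between `2 / b` and `(2 / b) cosh (b / 2)`: this only uses
`tanh y ≤ y ≤ sinh y` for `y ≥ 0`. Since `arccosh x = log (2x) + O(x⁻²)` and
`log cosh (b / 2) ≤ b² / 8`, the difference `arccosh x - log (4 / b)` is at most `b² / 4`
in absolute value.
-/

open Real

/-- The real inverse hyperbolic cosine, `arccosh x = log (x + √(x² − 1))`
(the inverse of `cosh` on `[1, ∞)`). -/
noncomputable def arccosh (x : ℝ) : ℝ := Real.log (x + Real.sqrt (x ^ 2 - 1))

lemma sinh_le_mul_cosh {y : ℝ} (hy : 0 ≤ y) : sinh y ≤ y * cosh y := by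
  rcases hy.eq_or_lt with rfl | hy
  · simp
  -- mean value theorem: `sinh y = y cosh ξ` for some `0 < ξ < y`
  obtain ⟨ξ, ⟨hξ0, hξy⟩, hslope⟩ := exists_hasDerivAt_eq_slope sinh cosh hy
    continuous_sinh.continuousOn fun z _ => hasDerivAt_sinh z
  rw [sinh_zero, sub_zero, sub_zero, eq_div_iff hy.ne'] at hslope
  have hcosh : cosh ξ ≤ cosh y :=
    cosh_le_cosh.2 (by rw [abs_of_pos hξ0, abs_of_pos hy]; exact hξy.le)
  nlinarith

lemma arcosh_le_log_two_mul {x : ℝ} (hx : 1 ≤ x) : arcosh x ≤ log (2 * x) := by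
  have hsqrt : √(x ^ 2 - 1) ≤ x := sqrt_le_iff.2 ⟨by linarith, by linarith⟩
  exact log_le_log (add_pos_of_pos_of_nonneg (by linarith) (sqrt_nonneg _)) (by linarith)

lemma log_two_mul_sub_inv_sq_le_arcosh {x : ℝ} (hx : 1 ≤ x) :
    log (2 * x) - (x ^ 2)⁻¹ ≤ arcosh x := by
  set r := x + √(x ^ 2 - 1) with hr
  have hxr : x ≤ r := le_add_of_nonneg_right (sqrt_nonneg _)
  have hr0 : 0 < r := by linarith
  -- `r⁻¹ = x - √(x² - 1)`, so `2x = r + r⁻¹`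
  have h2x : 2 * x = r * (1 + (r ^ 2)⁻¹) := by
    have hinv := add_sqrt_self_sq_sub_one_inv hx
    rw [← hr] at hinv
    field_simp
    nlinarith [mul_inv_cancel₀ hr0.ne']
  have hlog : log (1 + (r ^ 2)⁻¹) ≤ (x ^ 2)⁻¹ := by
    refine (log_le_sub_one_of_pos (by positivity)).trans ?_
    rw [add_sub_cancel_left]
    gcongr
  have hsplit : log (2 * x) = arcosh x + log (1 + (r ^ 2)⁻¹) := by
    rw [h2x, log_mul hr0.ne' (by positivity)]
    rfl
  linarith

lemma two_div_le_of_one_div_sq_le {b x : ℝ} (hb : 0 < b) (hx : 0 < x)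
    (h : 1 / x ^ 2 ≤ 1 - 1 / cosh (b / 2) ^ 2) : 2 / b ≤ x := by
  have hs : 0 < sinh (b / 2) := sinh_pos_iff.2 (by positivity)
  have hc : cosh (b / 2) ≤ x * sinh (b / 2) := by
    rw [← pow_le_pow_iff_left₀ (cosh_pos _).le (by positivity) two_ne_zero, mul_pow]
    rw [one_sub_div (by positivity), cosh_sq', add_sub_cancel_left,
      div_le_div_iff₀ (by positivity) (by positivity)] at h
    rw [cosh_sq']
    linarith
  rw [div_le_iff₀ hb]
  nlinarith [mul_le_mul_of_nonneg_left (sinh_le_mul_cosh (half_pos hb).le) hx.le, cosh_pos (b / 2)]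

lemma le_two_div_mul_cosh_of_le_one_div_sq {b x : ℝ} (hb : 0 < b) (hx : 0 < x)
    (h : 2 / cosh (b / 2) - 2 / cosh (b / 2) ^ 2 ≤ 1 / x ^ 2) : x ≤ 2 / b * cosh (b / 2) := by
  have hcosh : cosh (b / 2) = 1 + 2 * sinh (b / 4) ^ 2 := by
    rw [show b / 2 = 2 * (b / 4) by ring, cosh_two_mul, cosh_sq']
    ring
  have hc : 2 * x * sinh (b / 4) ≤ cosh (b / 2) := by
    rw [← pow_le_pow_iff_left₀ (by positivity) (cosh_pos _).le two_ne_zero]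
    rw [div_sub_div _ _ (cosh_pos _).ne' (by positivity),
      div_le_div_iff₀ (by positivity) (by positivity)] at h
    rw [hcosh] at h ⊢
    nlinarith
  rw [div_mul_eq_mul_div, le_div_iff₀ hb]
  nlinarith [self_le_sinh_iff.2 (show 0 ≤ b / 4 by positivity)]

lemma abs_arcosh_sub_log_four_div_le {b x : ℝ} (hb : 0 < b) (hx : 1 ≤ x)
    (hlow : 2 / cosh (b / 2) - 2 / cosh (b / 2) ^ 2 ≤ 1 / x ^ 2)
    (hup : 1 / x ^ 2 ≤ 1 - 1 / cosh (b / 2) ^ 2) :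
    |arcosh x - log (4 / b)| ≤ b ^ 2 / 4 := by
  have hx0 : 0 < x := by linarith
  have hxb := two_div_le_of_one_div_sq_le hb hx0 hup
  have hxc := le_two_div_mul_cosh_of_le_one_div_sq hb hx0 hlow
  have hinv : (x ^ 2)⁻¹ ≤ b ^ 2 / 4 := by
    rw [show b ^ 2 / 4 = ((2 / b) ^ 2)⁻¹ by field_simp; ring]
    gcongr
  have h4b : 4 / b = 2 * (2 / b) := by ring
  have hlog_lower : log (4 / b) ≤ log (2 * x) :=
    log_le_log (by positivity) (by rw [h4b]; linarith)
  have hlog_upper : log (2 * x) ≤ log (4 / b) + b ^ 2 / 8 := by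
    have hcosh : cosh (b / 2) ≤ exp (b ^ 2 / 8) := by
      convert cosh_le_exp_half_sq (b / 2) using 2
      ring
    calc log (2 * x) ≤ log (4 / b * exp (b ^ 2 / 8)) := by
          refine log_le_log (by positivity) ?_
          calc 2 * x ≤ 4 / b * cosh (b / 2) := by rw [h4b, mul_assoc]; linarith
            _ ≤ 4 / b * exp (b ^ 2 / 8) := by gcongr
      _ = log (4 / b) + b ^ 2 / 8 := by rw [log_mul (by positivity) (exp_pos _).ne', log_exp]
  rw [abs_le]
  constructor
  · linarith [log_two_mul_sub_inv_sq_le_arcosh hx]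
  · linarith [arcosh_le_log_two_mul hx]

/-- the asymptotic `ℓ(γ′) ∼ |log ℓ(γ)|` in the proof of Theorem 4.3: for every
`ε > 0` there is `b₀ > 0` such that for all `0 < b < b₀` and all `x ≥ 1` in the sandwich
`2/cosh(b/2) − 2/cosh²(b/2) ≤ 1/x² ≤ 1 − 1/cosh²(b/2)`, one has
`|arccosh x − log(4/b)| < ε`. -/
theorem arccosh_log_asymptotic (ε : ℝ) (hε : 0 < ε) :
    ∃ b₀ : ℝ, 0 < b₀ ∧ ∀ b : ℝ, 0 < b → b < b₀ → ∀ x : ℝ, 1 ≤ x →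
      2 / Real.cosh (b / 2) - 2 / Real.cosh (b / 2) ^ 2 ≤ 1 / x ^ 2 →
      1 / x ^ 2 ≤ 1 - 1 / Real.cosh (b / 2) ^ 2 →
      |arccosh x - Real.log (4 / b)| < ε := by
  refine ⟨√ε, sqrt_pos.2 hε, fun b hb hbε x hx hlow hup => ?_⟩
  have hb2 : b ^ 2 < ε := (lt_sqrt hb.le).1 hbε
  -- `arccosh` unfolds to Mathlib's `Real.arcosh`, the subject of the lemmas above
  calc |arccosh x - log (4 / b)| ≤ b ^ 2 / 4 := abs_arcosh_sub_log_four_div_le hb hx hlow hup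
    _ < ε := by linarith [sq_nonneg b]
end
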